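/- Every binary word w containing a pattern p has a unique 'primitive reduction': deleting from w all indices not contained in any occurrence of p yields a word w' that is primitive with respect to p and satisfies c_p(w') = c_p(w). -/

import Mathlib

/-- An occurrence of the pattern `p` in the word `w`: a strictly increasing
index tuple whose corresponding subsequence of `w` equals `p`. -/
def Occ (p w : List Bool) : Type :=
  {f : Fin p.length → Fin w.length // StrictMono f ∧ ∀ j, w.get (f j) = p.get j}

/-- `numOcc p w` is `c_p(w)`, the number of occurrences of `p` in `w`. -/
noncomputable def numOcc (p w : List Bool) : ℕ := Nat.card (Occ p w)

/-- `w` is primitive with respect to `p` if every index of `w` is contained in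
some occurrence of `p` in `w`. -/
def Primitive (p w : List Bool) : Prop :=
  ∀ i : Fin w.length, ∃ g : Occ p w, ∃ j, g.1 j = i

open Classical in
/-- The primitive reduction of `w` with respect to `p`: delete all indices of `w`
not contained in any occurrence of `p`. -/
noncomputable def reduce (p w : List Bool) : List Bool :=
  (((List.finRange w.length).filter
    fun i => decide (∃ g : Occ p w, ∃ j, g.1 j = i)).map w.get)

/-!
The kept indices, listed in increasing order, give a letter-preserving order embedding of the
reduced word into `w`. Pushing occurrences forward along it is injective, and surjective because
every occurrence of `p` in `w` uses only kept indices. Primitivity also comes from surjectivity: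
a kept index lies in an occurrence in `w`, which is the image of an occurrence in the reduced word.
-/

namespace Occ

variable {p v w : List Bool} (e : Fin v.length ↪o Fin w.length)
  (he : ∀ k, w.get (e k) = v.get k)

def pushforward (g : Occ p v) : Occ p w :=
  ⟨e ∘ g.1, e.strictMono.comp g.2.1, fun j => (he _).trans (g.2.2 j)⟩

theorem pushforward_injective : Function.Injective (pushforward (p := p) e he) := by
  intro g g' hgg'
  apply Subtype.ext
  funext j
  exact e.injective (congrFun (congrArg Subtype.val hgg') j)

theorem pushforward_surjective (hrange : ∀ (g : Occ p w) j, g.1 j ∈ Set.range e) :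
    Function.Surjective (pushforward (p := p) e he) := by
  intro g
  choose f hf using hrange g
  refine ⟨⟨f, fun a b hab => ?_, fun j => ?_⟩, Subtype.ext (funext hf)⟩
  · rw [← e.lt_iff_lt, hf, hf]
    exact g.2.1 hab
  · rw [← he, hf]
    exact g.2.2 j

end Occ

section IndexSublist

variable {w : List Bool} {s : List (Fin w.length)}

def indexEmbedding (hs : s.Pairwise (· < ·)) : Fin (s.map w.get).length ↪o Fin w.length :=
  OrderEmbedding.ofStrictMono (fun k => s.get (k.cast (List.length_map w.get)))
    fun _ _ hab => List.pairwise_iff_get.mp hs _ _ hab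

variable (hs : s.Pairwise (· < ·))

theorem get_indexEmbedding (k : Fin (s.map w.get).length) :
    w.get (indexEmbedding hs k) = (s.map w.get).get k := by
  simp [indexEmbedding]

theorem mem_range_indexEmbedding {i : Fin w.length} :
    i ∈ Set.range (indexEmbedding hs) ↔ i ∈ s := by
  rw [List.mem_iff_get]
  exact ⟨fun ⟨k, hk⟩ => ⟨_, hk⟩, fun ⟨k, hk⟩ => ⟨k.cast (List.length_map w.get).symm, hk⟩⟩

end IndexSublist

open Classical in
noncomputable def coveredIndices (p w : List Bool) : List (Fin w.length) :=
  (List.finRange w.length).filter fun i => decide (∃ g : Occ p w, ∃ j, g.1 j = i)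

theorem reduce_eq_map_coveredIndices (p w : List Bool) :
    reduce p w = (coveredIndices p w).map w.get :=
  rfl

theorem mem_coveredIndices {p w : List Bool} {i : Fin w.length} :
    i ∈ coveredIndices p w ↔ ∃ g : Occ p w, ∃ j, g.1 j = i := by
  simp [coveredIndices]

theorem coveredIndices_pairwise_lt (p w : List Bool) :
    (coveredIndices p w).Pairwise (· < ·) :=
  (List.pairwise_lt_finRange w.length).sublist List.filter_sublist

theorem stmt13_general (p w : List Bool) :
    Primitive p (reduce p w) ∧ numOcc p (reduce p w) = numOcc p w := by
  rw [reduce_eq_map_coveredIndices]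
  set e := indexEmbedding (coveredIndices_pairwise_lt p w)
  have he := get_indexEmbedding (coveredIndices_pairwise_lt p w)
  have hsurj : Function.Surjective (Occ.pushforward (p := p) e he) :=
    Occ.pushforward_surjective e he fun g j =>
      (mem_range_indexEmbedding _).mpr (mem_coveredIndices.mpr ⟨g, j, rfl⟩)
  refine ⟨fun i => ?_, Nat.card_eq_of_bijective _ ⟨Occ.pushforward_injective e he, hsurj⟩⟩
  obtain ⟨g, j, hj⟩ := mem_coveredIndices.mp ((mem_range_indexEmbedding _).mp ⟨i, rfl⟩)
  obtain ⟨g', rfl⟩ := hsurj g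
  exact ⟨g', j, e.injective hj⟩

theorem stmt13 (p w : List Bool) (h : Nonempty (Occ p w)) :
    Primitive p (reduce p w) ∧ numOcc p (reduce p w) = numOcc p w :=
  stmt13_general p w
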